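/- Let μ ∈ ℂ and let a, b ∈ ℝ with π/2 < a < b < 3π/2. Then there exists a constant C > 0 such that for every x of the form x = r·e^{iψ} with r > 0 and a < ψ < b, one has |F(μ;q,x) − (q^μ;q)_∞·e^{−x}| ≤ C·e^{−q·Re(x)}. In particular e^{x}·F(μ;q,x) → (q^μ;q)_∞ as |x| → ∞ with x in this sector. -/

import Mathlib

/-- `(a;c)_n = ∏_{j=0}^{n-1} (1 - a c^j)`. -/
noncomputable def qPoch (a c : ℂ) (n : ℕ) : ℂ := ∏ j ∈ Finset.range n, (1 - a * c ^ j)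

/-- `(a;c)_∞ = ∏_{j=0}^{∞} (1 - a c^j)`. -/
noncomputable def qPochInf (a c : ℂ) : ℂ := ∏' j : ℕ, (1 - a * c ^ j)

/-- `q^μ := exp (μ log q)` for real `q > 0` and complex `μ`. -/
noncomputable def qpow (q : ℝ) (μ : ℂ) : ℂ := Complex.exp (μ * Real.log q)

/-- `F(μ;q,x) = Σ_{n≥0} ((q^μ;q)_n / n!) (-x)^n`. -/
noncomputable def F (μ : ℂ) (q : ℝ) (x : ℂ) : ℂ :=
  ∑' n : ℕ, qPoch (qpow q μ) (q : ℂ) n / (Nat.factorial n : ℂ) * (-x) ^ n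

/-- `(a)_n = a (a+1) ⋯ (a+n-1)`. -/
noncomputable def poch (a : ℂ) (n : ℕ) : ℂ := ∏ j ∈ Finset.range n, (a + (j : ℂ))

/-- `G(a;q,x) = Σ_{n≥0} ((a)_n q^{n(n+1)/2} / (q;q)_n) (-x)^n`. -/
noncomputable def G (a : ℂ) (q : ℝ) (x : ℂ) : ℂ :=
  ∑' n : ℕ, poch a n * (q : ℂ) ^ (n * (n + 1) / 2) / qPoch (q : ℂ) (q : ℂ) n * (-x) ^ n

/-!
Let `E(z) = ∑ c_m z^m` be Euler's expansion of `(z;q)_∞`, so that `(a;q)_∞ = (a;q)_n E(a q^n)`.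
Substituting this into `(a;q)_∞ e^{-x} = ∑_n (a;q)_∞ (-x)^n / n!` and summing the double series
the other way round gives `(a;q)_∞ e^{-x} = ∑_m c_m a^m F(a; q, q^m x)`, whose `m = 0` term is
`F(a; q, x)`. In a sector `c |x| ≤ -Re x` every `F(a; q, q^m x)` with `m ≥ 1` is
`O(e^{-q Re x})`: for large `m` because `|F(y)| ≤ K e^{|y|}` and `q^m |x| ≤ q (-Re x)`, and for the
finitely many other `m` by applying the identity to `q^m x` itself, where
`|e^{-q^m x}| ≤ e^{-q Re x}`.
-/

open Filter Topology

lemma qPoch_succ (a q : ℂ) (n : ℕ) : qPoch a q (n + 1) = qPoch a q n * (1 - a * q ^ n) :=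
  Finset.prod_range_succ _ _

lemma norm_ofReal_lt_one {q : ℝ} (hq0 : 0 ≤ q) (hq1 : q < 1) : ‖(q : ℂ)‖ < 1 := by
  rwa [Complex.norm_real, Real.norm_of_nonneg hq0]

section Euler

variable {q : ℂ}

lemma one_sub_pow_succ_ne_zero (hq : ‖q‖ < 1) (m : ℕ) : 1 - q ^ (m + 1) ≠ 0 := by
  have hlt : ‖q ^ (m + 1)‖ < 1 := by
    rw [norm_pow]
    exact pow_lt_one₀ (norm_nonneg q) hq (Nat.succ_ne_zero m)
  exact sub_ne_zero.mpr fun h => by rw [← h, norm_one] at hlt; exact lt_irrefl _ hlt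

lemma norm_qPoch_le (hq : ‖q‖ < 1) (a : ℂ) (n : ℕ) :
    ‖qPoch a q n‖ ≤ Real.exp (‖a‖ / (1 - ‖q‖)) := by
  rw [qPoch, norm_prod]
  calc ∏ j ∈ Finset.range n, ‖1 - a * q ^ j‖
      ≤ ∏ j ∈ Finset.range n, Real.exp (‖a‖ * ‖q‖ ^ j) := by
        refine Finset.prod_le_prod (fun j _ => norm_nonneg _) fun j _ => ?_
        calc ‖1 - a * q ^ j‖ ≤ 1 + ‖a‖ * ‖q‖ ^ j := by
              simpa [norm_mul, norm_pow] using norm_sub_le (1 : ℂ) (a * q ^ j)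
          _ ≤ Real.exp (‖a‖ * ‖q‖ ^ j) := by linarith [Real.add_one_le_exp (‖a‖ * ‖q‖ ^ j)]
    _ = Real.exp (‖a‖ * ∑ j ∈ Finset.range n, ‖q‖ ^ j) := by
        rw [← Real.exp_sum, Finset.mul_sum]
    _ ≤ Real.exp (‖a‖ / (1 - ‖q‖)) := by
        rw [Real.exp_le_exp, div_eq_mul_inv, ← tsum_geometric_of_lt_one (norm_nonneg q) hq]
        exact mul_le_mul_of_nonneg_left
          ((summable_geometric_of_lt_one (norm_nonneg q) hq).sum_le_tsum _
            fun j _ => by positivity) (norm_nonneg a)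

/-- The coefficients `(-1)^m q^(m(m-1)/2) / (q;q)_m` of Euler's expansion
`(z;q)_∞ = ∑ c_m z^m`, defined through their recursion. -/
noncomputable def eulerCoeff (q : ℂ) : ℕ → ℂ
  | 0 => 1
  | m + 1 => -(q ^ m * eulerCoeff q m) / (1 - q ^ (m + 1))

@[simp]
lemma eulerCoeff_zero (q : ℂ) : eulerCoeff q 0 = 1 := rfl

noncomputable def eulerSeries (q z : ℂ) : ℂ := ∑' m, eulerCoeff q m * z ^ m

lemma eulerCoeff_succ_mul (hq : ‖q‖ < 1) (m : ℕ) :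
    eulerCoeff q (m + 1) * (1 - q ^ (m + 1)) = -(q ^ m * eulerCoeff q m) :=
  div_mul_cancel₀ _ (one_sub_pow_succ_ne_zero hq m)

lemma summable_norm_eulerCoeff_mul_pow (hq : ‖q‖ < 1) (z : ℂ) :
    Summable fun m => ‖eulerCoeff q m * z ^ m‖ := by
  have hq' : 0 < 1 - ‖q‖ := by linarith
  have hsmall : ∀ᶠ m : ℕ in atTop, ‖q‖ ^ m * ‖z‖ / (1 - ‖q‖) ≤ 1 / 2 := by
    have := ((tendsto_pow_atTop_nhds_zero_of_lt_one (norm_nonneg q) hq).mul_const ‖z‖).div_const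
      (1 - ‖q‖)
    rw [zero_mul, zero_div] at this
    exact this.eventually_le_const (by norm_num)
  refine summable_of_ratio_norm_eventually_le (f := fun m => ‖eulerCoeff q m * z ^ m‖) (r := 1 / 2)
    (by norm_num) ?_
  filter_upwards [hsmall] with m hm
  simp only [norm_norm]
  have hden : 1 - ‖q‖ ≤ ‖1 - q ^ (m + 1)‖ := by
    have htri := norm_sub_norm_le (1 : ℂ) (q ^ (m + 1))
    rw [norm_one, norm_pow] at htri
    have hpow : ‖q‖ ^ (m + 1) ≤ ‖q‖ := pow_le_of_le_one (norm_nonneg q) hq.le (Nat.succ_ne_zero m)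
    linarith
  have hrec : ‖eulerCoeff q (m + 1) * z ^ (m + 1)‖ * ‖1 - q ^ (m + 1)‖
      = ‖q‖ ^ m * ‖z‖ * ‖eulerCoeff q m * z ^ m‖ := by
    rw [← norm_mul, mul_right_comm, eulerCoeff_succ_mul hq]
    simp only [norm_mul, norm_neg, norm_pow]
    ring
  calc ‖eulerCoeff q (m + 1) * z ^ (m + 1)‖
      ≤ ‖q‖ ^ m * ‖z‖ / (1 - ‖q‖) * ‖eulerCoeff q m * z ^ m‖ := by
        rw [div_mul_eq_mul_div, le_div_iff₀ hq', ← hrec]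
        exact mul_le_mul_of_nonneg_left hden (norm_nonneg _)
    _ ≤ 1 / 2 * ‖eulerCoeff q m * z ^ m‖ := mul_le_mul_of_nonneg_right hm (norm_nonneg _)

lemma summable_eulerCoeff_mul_pow (hq : ‖q‖ < 1) (z : ℂ) :
    Summable fun m => eulerCoeff q m * z ^ m :=
  (summable_norm_eulerCoeff_mul_pow hq z).of_norm

lemma hasSum_eulerSeries (hq : ‖q‖ < 1) (z : ℂ) :
    HasSum (fun m => eulerCoeff q m * z ^ m) (eulerSeries q z) :=
  (summable_eulerCoeff_mul_pow hq z).hasSum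

lemma eulerSeries_eq_one_sub_mul (hq : ‖q‖ < 1) (z : ℂ) :
    eulerSeries q z = (1 - z) * eulerSeries q (q * z) := by
  set s : ℕ → ℂ := fun m => eulerCoeff q m * (q * z) ^ m
  have hs : Summable s := summable_eulerCoeff_mul_pow hq (q * z)
  have hshift : ∀ m, eulerCoeff q (m + 1) * z ^ (m + 1) = s (m + 1) - z * s m := by
    intro m
    have := eulerCoeff_succ_mul hq m
    simp only [s, mul_pow]
    linear_combination z ^ (m + 1) * this
  rw [eulerSeries, (summable_eulerCoeff_mul_pow hq z).tsum_eq_zero_add, tsum_congr hshift,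
    ((summable_nat_add_iff 1).mpr hs).tsum_sub (hs.mul_left z), tsum_mul_left,
    eulerSeries, hs.tsum_eq_zero_add]
  have hs0 : s 0 = 1 := by simp [s]
  rw [hs0, eulerCoeff_zero, pow_zero, mul_one]
  ring

lemma eulerSeries_eq_qPoch_mul (hq : ‖q‖ < 1) (z : ℂ) (n : ℕ) :
    eulerSeries q z = qPoch z q n * eulerSeries q (q ^ n * z) := by
  induction n with
  | zero => simp [qPoch]
  | succ n ih =>
    rw [ih, eulerSeries_eq_one_sub_mul hq, qPoch_succ, pow_succ', mul_assoc q]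
    ring

lemma tendsto_eulerSeries_pow_mul (hq : ‖q‖ < 1) (z : ℂ) :
    Tendsto (fun n : ℕ => eulerSeries q (q ^ n * z)) atTop (𝓝 1) := by
  have hlim : ∑' m, eulerCoeff q m * (0 : ℂ) ^ m = 1 := by
    rw [tsum_eq_single 0 fun m hm => by simp [hm]]
    simp
  rw [← hlim]
  refine tendsto_tsum_of_dominated_convergence (summable_norm_eulerCoeff_mul_pow hq z)
    (fun m => ?_) (Eventually.of_forall fun n m => ?_)
  · have := (tendsto_pow_atTop_nhds_zero_of_norm_lt_one hq).mul_const z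
    rw [zero_mul] at this
    exact (this.pow m).const_mul _
  · rw [norm_mul, norm_mul, norm_pow, norm_pow, norm_mul, norm_pow]
    gcongr
    exact mul_le_of_le_one_left (norm_nonneg z) (pow_le_one₀ (norm_nonneg _) hq.le)

theorem qPochInf_eq_eulerSeries (hq : ‖q‖ < 1) (z : ℂ) : qPochInf z q = eulerSeries q z := by
  have hmul : Multipliable fun j : ℕ => 1 - z * q ^ j := by
    simpa [sub_eq_add_neg] using Complex.multipliable_one_add_of_summable
      ((summable_geometric_of_norm_lt_one hq).mul_left (-z))
  have hlim := (hmul.hasProd.tendsto_prod_nat.mul (tendsto_eulerSeries_pow_mul hq z))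
  rw [mul_one] at hlim
  exact tendsto_nhds_unique hlim (tendsto_const_nhds.congr (eulerSeries_eq_qPoch_mul hq z))

end Euler

/-- `F μ q` is `pochExp (qpow q μ) q` by definition. -/
noncomputable def pochExp (a q x : ℂ) : ℂ :=
  ∑' n : ℕ, qPoch a q n / (Nat.factorial n : ℂ) * (-x) ^ n

section PochExp

variable {q : ℂ}

lemma norm_pochExp_term_le (hq : ‖q‖ < 1) (a x : ℂ) (n : ℕ) :
    ‖qPoch a q n / (Nat.factorial n : ℂ) * (-x) ^ n‖
      ≤ Real.exp (‖a‖ / (1 - ‖q‖)) * (‖x‖ ^ n / Nat.factorial n) := by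
  rw [norm_mul, norm_div, norm_pow, norm_neg, Complex.norm_natCast, div_mul_eq_mul_div,
    mul_div_assoc]
  gcongr
  exact norm_qPoch_le hq a n

lemma hasSum_mul_pow_div_factorial (K r : ℝ) :
    HasSum (fun n : ℕ => K * (r ^ n / Nat.factorial n)) (K * Real.exp r) := by
  rw [Real.exp_eq_exp_ℝ]
  exact (NormedSpace.expSeries_div_hasSum_exp r).mul_left K

lemma hasSum_pochExp (hq : ‖q‖ < 1) (a x : ℂ) :
    HasSum (fun n : ℕ => qPoch a q n / (Nat.factorial n : ℂ) * (-x) ^ n) (pochExp a q x) :=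
  (Summable.of_norm_bounded (hasSum_mul_pow_div_factorial _ ‖x‖).summable
    (norm_pochExp_term_le hq a x)).hasSum

lemma norm_pochExp_le (hq : ‖q‖ < 1) (a x : ℂ) :
    ‖pochExp a q x‖ ≤ Real.exp (‖a‖ / (1 - ‖q‖)) * Real.exp ‖x‖ :=
  (hasSum_pochExp hq a x).norm_le_of_bounded (hasSum_mul_pow_div_factorial _ ‖x‖)
    (norm_pochExp_term_le hq a x)

/-- Expanding `(a;q)_∞ = (a;q)_n (a q^n;q)_∞` by Euler in every term of the exponential series
of `(a;q)_∞ e^{-x}` and summing the double series the other way round. -/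
theorem hasSum_eulerCoeff_mul_pochExp (hq : ‖q‖ < 1) (a x : ℂ) :
    HasSum (fun m => eulerCoeff q m * a ^ m * pochExp a q (q ^ m * x))
      (eulerSeries q a * Complex.exp (-x)) := by
  set f : ℕ × ℕ → ℂ := fun p =>
    eulerCoeff q p.1 * a ^ p.1 * (qPoch a q p.2 / (Nat.factorial p.2 : ℂ) * (-(q ^ p.1 * x)) ^ p.2)
  have hf : Summable f := by
    refine Summable.of_norm_bounded ((summable_norm_eulerCoeff_mul_pow hq a).mul_of_nonneg
      (hasSum_mul_pow_div_factorial (Real.exp (‖a‖ / (1 - ‖q‖))) ‖x‖).summable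
      (fun _ => norm_nonneg _) fun _ => by positivity) fun p => ?_
    rw [norm_mul]
    gcongr
    refine (norm_pochExp_term_le hq a _ p.2).trans ?_
    rw [norm_mul, norm_pow]
    gcongr
    exact mul_le_of_le_one_left (norm_nonneg x) (pow_le_one₀ (norm_nonneg q) hq.le)
  have hrow : ∀ n : ℕ, HasSum (fun m => f (m, n))
      (eulerSeries q a * ((-x) ^ n / (Nat.factorial n : ℂ))) := by
    intro n
    have hterm : ∀ m, f (m, n) = qPoch a q n / (Nat.factorial n : ℂ) * (-x) ^ n
        * (eulerCoeff q m * (q ^ n * a) ^ m) := by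
      intro m
      simp only [f, mul_pow, neg_mul_eq_mul_neg, ← pow_mul, mul_comm m n]
      ring
    have hval : eulerSeries q a * ((-x) ^ n / (Nat.factorial n : ℂ))
        = qPoch a q n / (Nat.factorial n : ℂ) * (-x) ^ n * eulerSeries q (q ^ n * a) := by
      rw [eulerSeries_eq_qPoch_mul hq a n]
      ring
    rw [funext hterm, hval]
    exact (hasSum_eulerSeries hq _).mul_left _
  have hcol : ∀ m : ℕ, HasSum (fun n => f (m, n)) (eulerCoeff q m * a ^ m * pochExp a q (q ^ m * x)) :=
    fun m => (hasSum_pochExp hq a (q ^ m * x)).mul_left (eulerCoeff q m * a ^ m)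
  have hexp : HasSum (fun n : ℕ => eulerSeries q a * ((-x) ^ n / (Nat.factorial n : ℂ)))
      (eulerSeries q a * Complex.exp (-x)) := by
    rw [Complex.exp_eq_exp_ℂ]
    exact (NormedSpace.expSeries_div_hasSum_exp (-x)).mul_left _
  have hswap : HasSum (f ∘ Equiv.prodComm ℕ ℕ) (∑' p, f p) :=
    (Equiv.prodComm ℕ ℕ).hasSum_iff.mpr hf.hasSum
  rw [hexp.unique (hswap.prod_fiberwise hrow)]
  exact hf.hasSum.prod_fiberwise hcol

end PochExp

lemma summable_norm_eulerCoeff_mul_pochExp {q : ℂ} (hq : ‖q‖ < 1) (a x : ℂ) :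
    Summable fun m : ℕ =>
      ‖eulerCoeff q (m + 1) * a ^ (m + 1)‖ * ‖pochExp a q (q ^ (m + 1) * x)‖ := by
  refine Summable.of_nonneg_of_le (fun _ => by positivity) (fun m => ?_)
    (((summable_nat_add_iff 1).mpr (summable_norm_eulerCoeff_mul_pow hq a)).mul_right
      (Real.exp (‖a‖ / (1 - ‖q‖)) * Real.exp ‖x‖))
  refine mul_le_mul_of_nonneg_left ((norm_pochExp_le hq a _).trans ?_) (norm_nonneg _)
  gcongr
  rw [norm_mul, norm_pow]
  exact mul_le_of_le_one_left (norm_nonneg x) (pow_le_one₀ (norm_nonneg q) hq.le)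

lemma norm_pochExp_sub_le {q : ℂ} (hq : ‖q‖ < 1) (a x : ℂ) :
    ‖pochExp a q x - eulerSeries q a * Complex.exp (-x)‖
      ≤ ∑' m : ℕ, ‖eulerCoeff q (m + 1) * a ^ (m + 1)‖ * ‖pochExp a q (q ^ (m + 1) * x)‖ := by
  have htail := (hasSum_nat_add_iff' 1).mpr (hasSum_eulerCoeff_mul_pochExp hq a x)
  simp only [Finset.range_one, Finset.sum_singleton, pow_zero, one_mul, eulerCoeff_zero,
    mul_one] at htail
  rw [norm_sub_rev]
  exact htail.norm_le_of_bounded (summable_norm_eulerCoeff_mul_pochExp hq a x).hasSum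
    fun m => norm_mul_le _ _

lemma norm_pochExp_le_add_tsum {q : ℂ} (hq : ‖q‖ < 1) (a x : ℂ) :
    ‖pochExp a q x‖ ≤ ‖eulerSeries q a‖ * Real.exp (-x).re
      + ∑' m : ℕ, ‖eulerCoeff q (m + 1) * a ^ (m + 1)‖ * ‖pochExp a q (q ^ (m + 1) * x)‖ := by
  have htri := norm_sub_norm_le (pochExp a q x) (eulerSeries q a * Complex.exp (-x))
  rw [norm_mul, Complex.norm_exp] at htri
  linarith [norm_pochExp_sub_le hq a x]

lemma le_mul_one_add_tsum_pow_of_le_add_tsum {b w : ℕ → ℝ} {D M : ℝ} {N : ℕ}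
    (hb : ∀ j, 0 ≤ b j) (hbM : ∀ j, b j ≤ M) (hw : ∀ m, 0 ≤ w m) (hws : Summable w)
    (hfar : ∀ j, N ≤ j → b j ≤ D) (hrec : ∀ j, b j ≤ D + ∑' m, w m * b (j + m + 1)) (j : ℕ) :
    b j ≤ D * (1 + ∑' m, w m) ^ N := by
  set A := ∑' m, w m
  have hA : 0 ≤ A := tsum_nonneg hw
  have hD : 0 ≤ D := (hb N).trans (hfar N le_rfl)
  suffices h : ∀ k j, N ≤ j + k → b j ≤ D * (1 + A) ^ k from h N j (Nat.le_add_left N j)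
  intro k
  induction k with
  | zero => simpa using hfar
  | succ k ih =>
    intro j hj
    have hsum : ∑' m, w m * b (j + m + 1) ≤ A * (D * (1 + A) ^ k) := by
      rw [← tsum_mul_right]
      exact Summable.tsum_le_tsum (fun m => mul_le_mul_of_nonneg_left (ih _ (by omega)) (hw m))
        (Summable.of_nonneg_of_le (fun m => mul_nonneg (hw m) (hb _))
          (fun m => mul_le_mul_of_nonneg_left (hbM _) (hw m)) (hws.mul_right M))
        (hws.mul_right _)
    have hone : 1 ≤ (1 + A) ^ k := one_le_pow₀ (by linarith)
    calc b j ≤ D + A * (D * (1 + A) ^ k) := by linarith [hrec j]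
      _ ≤ D * (1 + A) ^ (k + 1) := by
        rw [pow_succ]
        nlinarith [mul_le_mul_of_nonneg_left hone hD]

section Sector

variable {q : ℝ}

lemma norm_ofReal_pow_mul (hq0 : 0 ≤ q) (n : ℕ) (x : ℂ) : ‖(q : ℂ) ^ n * x‖ = q ^ n * ‖x‖ := by
  rw [norm_mul, norm_pow, Complex.norm_real, Real.norm_of_nonneg hq0]

lemma exp_neg_re_ofReal_pow_mul_le (hq0 : 0 ≤ q) (hq1 : q ≤ 1) {n : ℕ} (hn : n ≠ 0) {x : ℂ}
    (hx : 0 ≤ -x.re) : Real.exp (-((q : ℂ) ^ n * x).re) ≤ Real.exp (-q * x.re) := by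
  rw [Real.exp_le_exp, ← Complex.ofReal_pow, Complex.re_ofReal_mul]
  have := mul_le_mul_of_nonneg_right (pow_le_of_le_one hq0 hq1 hn) hx
  linarith

/-- Once `q^(j+1) ≤ q c` this is the crude bound `‖F(y)‖ ≤ K e^‖y‖`; the finitely many remaining
`j` follow from `norm_pochExp_le_add_tsum` by downward induction. -/
lemma norm_pochExp_pow_succ_mul_le (hq0 : 0 < q) (hq1 : q < 1) (a : ℂ) {c : ℝ} {N : ℕ}
    (hN : q ^ N ≤ q * c) {x : ℂ} (hx : c * ‖x‖ ≤ -x.re) (j : ℕ) :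
    ‖pochExp a q ((q : ℂ) ^ (j + 1) * x)‖
      ≤ (Real.exp (‖a‖ / (1 - ‖(q : ℂ)‖)) + ‖eulerSeries q a‖) * Real.exp (-q * x.re)
        * (1 + ∑' m : ℕ, ‖eulerCoeff q (m + 1) * a ^ (m + 1)‖) ^ N := by
  have hq := norm_ofReal_lt_one hq0.le hq1
  set K := Real.exp (‖a‖ / (1 - ‖(q : ℂ)‖))
  set P := ‖eulerSeries q a‖
  have hc : 0 ≤ c := nonneg_of_mul_nonneg_right ((pow_pos hq0 N).le.trans hN) hq0
  have hx0 : 0 ≤ -x.re := (mul_nonneg hc (norm_nonneg x)).trans hx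
  refine le_mul_one_add_tsum_pow_of_le_add_tsum
    (b := fun j => ‖pochExp a q ((q : ℂ) ^ (j + 1) * x)‖) (M := K * Real.exp ‖x‖)
    (fun _ => norm_nonneg _) (fun j => ?_) (fun _ => norm_nonneg _)
    ((summable_nat_add_iff 1).mpr (summable_norm_eulerCoeff_mul_pow hq a)) (fun j hj => ?_)
    (fun j => ?_) j
  · refine (norm_pochExp_le hq a _).trans ?_
    gcongr
    rw [norm_ofReal_pow_mul hq0.le]
    exact mul_le_of_le_one_left (norm_nonneg x) (pow_le_one₀ hq0.le hq1.le)
  · have hy : ‖(q : ℂ) ^ (j + 1) * x‖ ≤ -q * x.re := by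
      rw [norm_ofReal_pow_mul hq0.le]
      calc q ^ (j + 1) * ‖x‖ ≤ q * c * ‖x‖ := by
            gcongr
            exact (pow_le_pow_of_le_one hq0.le hq1.le (by omega)).trans hN
        _ ≤ -q * x.re := by nlinarith
    calc ‖pochExp a q ((q : ℂ) ^ (j + 1) * x)‖ ≤ K * Real.exp (-q * x.re) :=
          (norm_pochExp_le hq a _).trans (by gcongr)
      _ ≤ (K + P) * Real.exp (-q * x.re) := by gcongr; exact le_add_of_nonneg_right (norm_nonneg _)
  · have hshift : ∀ m : ℕ, (q : ℂ) ^ (m + 1) * ((q : ℂ) ^ (j + 1) * x)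
        = (q : ℂ) ^ (j + m + 1 + 1) * x := fun m => by rw [← mul_assoc, ← pow_add]; ring_nf
    have hexp : P * Real.exp (-((q : ℂ) ^ (j + 1) * x)).re ≤ P * Real.exp (-q * x.re) :=
      mul_le_mul_of_nonneg_left
        (exp_neg_re_ofReal_pow_mul_le hq0.le hq1.le (Nat.succ_ne_zero j) hx0) (norm_nonneg _)
    have hrec := norm_pochExp_le_add_tsum hq a ((q : ℂ) ^ (j + 1) * x)
    simp only [hshift] at hrec
    have hK : 0 ≤ K * Real.exp (-q * x.re) := by positivity
    linarith

theorem exists_norm_pochExp_sub_le_of_sector (hq0 : 0 < q) (hq1 : q < 1) (a : ℂ) {c : ℝ}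
    (hc : 0 < c) : ∃ C, 0 < C ∧ ∀ x : ℂ, c * ‖x‖ ≤ -x.re →
      ‖pochExp a q x - eulerSeries q a * Complex.exp (-x)‖ ≤ C * Real.exp (-q * x.re) := by
  have hq := norm_ofReal_lt_one hq0.le hq1
  obtain ⟨N, hN⟩ := exists_pow_lt_of_lt_one (mul_pos hq0 hc) hq1
  set A := ∑' m : ℕ, ‖eulerCoeff q (m + 1) * a ^ (m + 1)‖
  set B := (Real.exp (‖a‖ / (1 - ‖(q : ℂ)‖)) + ‖eulerSeries q a‖) * (1 + A) ^ N
  have hA : 0 ≤ A := tsum_nonneg fun _ => norm_nonneg _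
  refine ⟨A * B + 1, by positivity, fun x hx => ?_⟩
  have hsum : ∑' m : ℕ, ‖eulerCoeff q (m + 1) * a ^ (m + 1)‖ * ‖pochExp a q ((q : ℂ) ^ (m + 1) * x)‖
      ≤ A * (B * Real.exp (-q * x.re)) := by
    rw [← tsum_mul_right]
    refine Summable.tsum_le_tsum (fun m => mul_le_mul_of_nonneg_left ?_ (norm_nonneg _)) ?_ ?_
    · exact (norm_pochExp_pow_succ_mul_le hq0 hq1 a hN.le hx m).trans_eq (by ring)
    · exact summable_norm_eulerCoeff_mul_pochExp hq a x
    · exact ((summable_nat_add_iff 1).mpr (summable_norm_eulerCoeff_mul_pow hq a)).mul_right _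
  calc ‖pochExp a q x - eulerSeries q a * Complex.exp (-x)‖
      ≤ A * (B * Real.exp (-q * x.re)) := (norm_pochExp_sub_le hq a x).trans hsum
    _ ≤ (A * B + 1) * Real.exp (-q * x.re) := by nlinarith [Real.exp_pos (-q * x.re)]

end Sector

lemma exists_pos_forall_cos_le_neg {a b : ℝ} (ha : Real.pi / 2 < a) (hab : a < b)
    (hb : b < 3 * Real.pi / 2) :
    ∃ c > 0, ∀ ψ, a < ψ → ψ < b → Real.cos ψ ≤ -c := by
  refine ⟨-max (Real.cos a) (Real.cos b), ?_, fun ψ haψ hψb => ?_⟩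
  · refine neg_pos.mpr (max_lt ?_ ?_) <;>
      exact Real.cos_neg_of_pi_div_two_lt_of_lt (by linarith) (by linarith [Real.pi_pos])
  rw [neg_neg, le_max_iff]
  rcases le_or_gt ψ Real.pi with hψ | hψ
  · exact Or.inl (Real.cos_le_cos_of_nonneg_of_le_pi (by linarith [Real.pi_pos]) hψ haψ.le)
  · right
    rw [← Real.cos_two_pi_sub ψ, ← Real.cos_two_pi_sub b]
    exact Real.cos_le_cos_of_nonneg_of_le_pi (by linarith) (by linarith) (by linarith)

lemma norm_ofReal_mul_exp_mul_I {r : ℝ} (hr : 0 < r) (ψ : ℝ) :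
    ‖(r : ℂ) * Complex.exp (Complex.I * ψ)‖ = r := by
  rw [norm_mul, mul_comm Complex.I, Complex.norm_exp_ofReal_mul_I, Complex.norm_real,
    Real.norm_of_nonneg hr.le, mul_one]

lemma mul_norm_le_neg_re_of_cos_le {c r ψ : ℝ} (hr : 0 < r) (hψ : Real.cos ψ ≤ -c) :
    c * ‖(r : ℂ) * Complex.exp (Complex.I * ψ)‖ ≤ -((r : ℂ) * Complex.exp (Complex.I * ψ)).re := by
  rw [norm_ofReal_mul_exp_mul_I hr, Complex.re_ofReal_mul, mul_comm Complex.I,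
    Complex.exp_ofReal_mul_I_re]
  nlinarith

lemma norm_exp_mul_sub_le_of_sector {q c C : ℝ} (hq1 : q < 1) {u P x : ℂ}
    (hu : ‖u - P * Complex.exp (-x)‖ ≤ C * Real.exp (-q * x.re)) (hx : c * ‖x‖ ≤ -x.re) :
    ‖Complex.exp x * u - P‖ ≤ C * Real.exp (-((1 - q) * c * ‖x‖)) := by
  have hC : 0 ≤ C := nonneg_of_mul_nonneg_left ((norm_nonneg _).trans hu) (Real.exp_pos _)
  calc ‖Complex.exp x * u - P‖ = Real.exp x.re * ‖u - P * Complex.exp (-x)‖ := by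
        rw [← Complex.norm_exp, ← norm_mul, mul_sub, mul_left_comm, ← Complex.exp_add,
          add_neg_cancel, Complex.exp_zero, mul_one]
    _ ≤ Real.exp x.re * (C * Real.exp (-q * x.re)) := by gcongr
    _ = C * Real.exp ((1 - q) * x.re) := by rw [mul_left_comm, ← Real.exp_add]; ring_nf
    _ ≤ C * Real.exp (-((1 - q) * c * ‖x‖)) := by gcongr; nlinarith

/-- in any sector `a < arg x < b` with `π/2 < a < b < 3π/2`,
`|F(μ;q,x) - (q^μ;q)_∞ e^{-x}| ≤ C e^{-q Re x}`; in particular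
`e^x F(μ;q,x) → (q^μ;q)_∞` as `|x| → ∞` in the sector. -/
theorem stmt8 (q : ℝ) (hq0 : 0 < q) (hq1 : q < 1)
    (μ : ℂ) (a b : ℝ) (ha : Real.pi / 2 < a) (hab : a < b) (hb : b < 3 * Real.pi / 2) :
    (∃ C : ℝ, 0 < C ∧ ∀ r : ℝ, 0 < r → ∀ ψ : ℝ, a < ψ → ψ < b →
      ‖F μ q ((r : ℂ) * Complex.exp (Complex.I * ψ)) -
          qPochInf (qpow q μ) (q : ℂ) *
            Complex.exp (-((r : ℂ) * Complex.exp (Complex.I * ψ)))‖ ≤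
        C * Real.exp (-q * ((r : ℂ) * Complex.exp (Complex.I * ψ)).re)) ∧
    (∀ ε : ℝ, 0 < ε → ∃ M : ℝ, ∀ r : ℝ, M < r → ∀ ψ : ℝ, a < ψ → ψ < b →
      ‖Complex.exp ((r : ℂ) * Complex.exp (Complex.I * ψ)) *
          F μ q ((r : ℂ) * Complex.exp (Complex.I * ψ)) -
          qPochInf (qpow q μ) (q : ℂ)‖ < ε) := by
  obtain ⟨c, hc, hcos⟩ := exists_pos_forall_cos_le_neg ha hab hb
  obtain ⟨C, hC, hbound⟩ := exists_norm_pochExp_sub_le_of_sector hq0 hq1 (qpow q μ) hc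
  rw [qPochInf_eq_eulerSeries (norm_ofReal_lt_one hq0.le hq1)]
  have hsector : ∀ r : ℝ, 0 < r → ∀ ψ : ℝ, a < ψ → ψ < b →
      c * ‖(r : ℂ) * Complex.exp (Complex.I * ψ)‖ ≤ -((r : ℂ) * Complex.exp (Complex.I * ψ)).re :=
    fun r hr ψ h₁ h₂ => mul_norm_le_neg_re_of_cos_le hr (hcos ψ h₁ h₂)
  refine ⟨⟨C, hC, fun r hr ψ h₁ h₂ => hbound _ (hsector r hr ψ h₁ h₂)⟩, fun ε hε => ?_⟩
  have hlim : Tendsto (fun r => C * Real.exp (-((1 - q) * c * r))) atTop (𝓝 0) := by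
    simpa using (Real.tendsto_exp_neg_atTop_nhds_zero.comp
      (tendsto_id.const_mul_atTop (by nlinarith : 0 < (1 - q) * c))).const_mul C
  obtain ⟨M, hM⟩ := eventually_atTop.mp (hlim.eventually (gt_mem_nhds hε))
  refine ⟨max M 0, fun r hr ψ h₁ h₂ => ?_⟩
  have hr0 : 0 < r := (le_max_right M 0).trans_lt hr
  calc _ ≤ C * Real.exp (-((1 - q) * c * ‖(r : ℂ) * Complex.exp (Complex.I * ψ)‖)) :=
        norm_exp_mul_sub_le_of_sector hq1 (hbound _ (hsector r hr0 ψ h₁ h₂))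
          (hsector r hr0 ψ h₁ h₂)
    _ < ε := by
        rw [norm_ofReal_mul_exp_mul_I hr0]
        exact hM r ((le_max_left M 0).trans hr.le)
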